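/- Let G be a finite simple graph, let n > 2, and let A = {A₁, …, A_n} be an independent set of n vertices of G, none of which is isolated in G. Let G' be obtained from G by adding, for each i ∈ {1,2}, a root vertex m_i and pendant vertices m^i_1, …, m^i_n with edges m_i–m^i_j and m^i_j–A_j for all j ∈ [n], and additionally edges m^1_j–m^2_{j+1} for all j ∈ [n] (indices modulo n); no other edges are added. Then for every vertex w ∈ A ∪ {m₁, m₂} ∪ {m^i_j : i ∈ {1,2}, j ∈ [n]}, there do not exist vertices u, v ∈ V(G') ∖ {w} with N_{G'}(w) ⊆ N_{G'}(u) ∪ N_{G'}(v). -/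

import Mathlib

/-- The graph `G'` obtained from `G` by attaching a double matching gadget to the set
`A = {A₁, …, A_n}`: for each `i ∈ {1,2}` a root `m_i` (`Sum.inr (Sum.inl i)`) and pendants
`m^i_j` (`Sum.inr (Sum.inr (i, j))`) with edges `m_i–m^i_j` and `m^i_j–A_j`, together with
the edges `m^1_j–m^2_{j+1}` (indices mod `n`); no other edges are added. -/
def doubleMatchGraph {V : Type*} (G : SimpleGraph V) (n : ℕ) (A : Fin n → V) :
    SimpleGraph (V ⊕ Fin 2 ⊕ (Fin 2 × Fin n)) :=
  SimpleGraph.fromRel (fun x y =>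
    match x, y with
    | Sum.inl v, Sum.inl w => G.Adj v w
    | Sum.inr (Sum.inl i), Sum.inr (Sum.inr (i', _)) => i = i'
    | Sum.inr (Sum.inr (_, j)), Sum.inl v => v = A j
    | Sum.inr (Sum.inr (i, j)), Sum.inr (Sum.inr (i', j')) =>
        i.val = 0 ∧ i'.val = 1 ∧ j'.val = (j.val + 1) % n
    | _, _ => False)

section Aux

variable {V : Type*} {G : SimpleGraph V} {n : ℕ} {A : Fin n → V}

private lemma adj_ll {a b : V} :
    (doubleMatchGraph G n A).Adj (Sum.inl a) (Sum.inl b) ↔ G.Adj a b := by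
  simp only [doubleMatchGraph, SimpleGraph.fromRel_adj, ne_eq, Sum.inl.injEq]
  constructor
  · rintro ⟨h, h1 | h1⟩ <;> [exact h1; exact h1.symm]
  · intro h; exact ⟨fun e => G.loopless.irrefl b (e ▸ h), Or.inl h⟩

private lemma adj_lr {a : V} {i : Fin 2} :
    ¬ (doubleMatchGraph G n A).Adj (Sum.inl a) (Sum.inr (Sum.inl i)) := by
  simp [doubleMatchGraph, SimpleGraph.fromRel_adj]

private lemma adj_lp {a : V} {i : Fin 2} {j : Fin n} :
    (doubleMatchGraph G n A).Adj (Sum.inl a) (Sum.inr (Sum.inr (i, j))) ↔ a = A j := by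
  simp [doubleMatchGraph, SimpleGraph.fromRel_adj]

private lemma adj_rr {i i' : Fin 2} :
    ¬ (doubleMatchGraph G n A).Adj (Sum.inr (Sum.inl i)) (Sum.inr (Sum.inl i')) := by
  simp [doubleMatchGraph, SimpleGraph.fromRel_adj]

private lemma adj_rp {i i' : Fin 2} {j : Fin n} :
    (doubleMatchGraph G n A).Adj (Sum.inr (Sum.inl i)) (Sum.inr (Sum.inr (i', j))) ↔ i = i' := by
  simp [doubleMatchGraph, SimpleGraph.fromRel_adj]

private lemma adj_pp {i i' : Fin 2} {j j' : Fin n} :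
    (doubleMatchGraph G n A).Adj (Sum.inr (Sum.inr (i, j))) (Sum.inr (Sum.inr (i', j'))) ↔
      ((i.val = 0 ∧ i'.val = 1 ∧ j'.val = (j.val + 1) % n) ∨
       (i'.val = 0 ∧ i.val = 1 ∧ j.val = (j'.val + 1) % n)) := by
  simp only [doubleMatchGraph, SimpleGraph.fromRel_adj, ne_eq, Sum.inr.injEq, Prod.mk.injEq]
  constructor
  · rintro ⟨h, h1 | h1⟩ <;> [exact Or.inl h1; exact Or.inr h1]
  · rintro (⟨h0, h1, h2⟩ | ⟨h0, h1, h2⟩)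
    · exact ⟨by rintro ⟨e, _⟩; rw [e] at h0; omega, Or.inl ⟨h0, h1, h2⟩⟩
    · exact ⟨by rintro ⟨e, _⟩; rw [← e] at h0; omega, Or.inr ⟨h0, h1, h2⟩⟩

private lemma fin2_eq_zero {i : Fin 2} (h : i.val = 0) : i = 0 := Fin.ext h
private lemma fin2_eq_one {i : Fin 2} (h : i.val = 1) : i = 1 := Fin.ext h

private lemma succ_mod_inj {n : ℕ} {a b : ℕ} (ha : a < n) (hb : b < n)
    (h : (a + 1) % n = (b + 1) % n) : a = b := by
  rcases Nat.lt_or_ge (a + 1) n with h1 | h1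
  · rw [Nat.mod_eq_of_lt h1] at h
    rcases Nat.lt_or_ge (b + 1) n with h2 | h2
    · rw [Nat.mod_eq_of_lt h2] at h; omega
    · have hb1 : b + 1 = n := by omega
      rw [hb1, Nat.mod_self] at h; omega
  · have ha1 : a + 1 = n := by omega
    rw [ha1, Nat.mod_self] at h
    rcases Nat.lt_or_ge (b + 1) n with h2 | h2
    · rw [Nat.mod_eq_of_lt h2] at h; omega
    · omega

private lemma exists_pred {n : ℕ} (hn : 0 < n) (j : Fin n) :
    ∃ j' : Fin n, (j'.val + 1) % n = j.val := by
  have key : ∀ m : ℕ, m < n → ((m + n - 1) % n + 1) % n = m := by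
    intro m hm
    rcases Nat.eq_zero_or_pos m with rfl | h
    · have e1 : (n - 1) % n = n - 1 := Nat.mod_eq_of_lt (by omega)
      rw [show 0 + n - 1 = n - 1 from by omega, e1,
        show n - 1 + 1 = n from by omega, Nat.mod_self]
    · have e1 : (m - 1) % n = m - 1 := Nat.mod_eq_of_lt (by omega)
      rw [show m + n - 1 = n + (m - 1) from by omega, Nat.add_mod_left,
        e1, show m - 1 + 1 = m from by omega, Nat.mod_eq_of_lt hm]
  exact ⟨⟨(j.val + n - 1) % n, Nat.mod_lt _ hn⟩, key j.val j.isLt⟩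

private lemma adj_to_root {x : V ⊕ Fin 2 ⊕ (Fin 2 × Fin n)} {i : Fin 2}
    (h : (doubleMatchGraph G n A).Adj x (Sum.inr (Sum.inl i))) :
    ∃ j, x = Sum.inr (Sum.inr (i, j)) := by
  match x with
  | Sum.inl a => exact absurd h adj_lr
  | Sum.inr (Sum.inl i') => exact absurd h adj_rr
  | Sum.inr (Sum.inr (i', j)) =>
    exact ⟨j, by rw [adj_rp.mp h.symm]⟩

private lemma adj_to_inl {x : V ⊕ Fin 2 ⊕ (Fin 2 × Fin n)} {b : V}
    (h : (doubleMatchGraph G n A).Adj x (Sum.inl b)) :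
    (∃ a, x = Sum.inl a ∧ G.Adj a b) ∨ ∃ i k, x = Sum.inr (Sum.inr (i, k)) ∧ b = A k := by
  match x with
  | Sum.inl a => exact Or.inl ⟨a, rfl, adj_ll.mp h⟩
  | Sum.inr (Sum.inl i') => exact absurd h.symm adj_lr
  | Sum.inr (Sum.inr (i', k)) => exact Or.inr ⟨i', k, rfl, adj_lp.mp h.symm⟩

private lemma adj_to_pend {x : V ⊕ Fin 2 ⊕ (Fin 2 × Fin n)} {i : Fin 2} {j : Fin n}
    (h : (doubleMatchGraph G n A).Adj x (Sum.inr (Sum.inr (i, j)))) :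
    x = Sum.inr (Sum.inl i) ∨ x = Sum.inl (A j) ∨
      ∃ (i' : Fin 2) (j' : Fin n), x = Sum.inr (Sum.inr (i', j')) ∧
        ((i'.val = 0 ∧ i.val = 1 ∧ j.val = (j'.val + 1) % n) ∨
         (i.val = 0 ∧ i'.val = 1 ∧ j'.val = (j.val + 1) % n)) := by
  match x with
  | Sum.inl a => exact Or.inr (Or.inl (by rw [adj_lp.mp h]))
  | Sum.inr (Sum.inl i') => exact Or.inl (by rw [adj_rp.mp h])
  | Sum.inr (Sum.inr (i', j')) => exact Or.inr (Or.inr ⟨i', j', rfl, adj_pp.mp h⟩)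

end Aux

private lemma pigeon {α : Type*} {C₁ C₂ C₃ : α → Prop} {u v : α}
    (h₁ : C₁ u ∨ C₁ v) (h₂ : C₂ u ∨ C₂ v) (h₃ : C₃ u ∨ C₃ v)
    (k12 : ∀ x, C₁ x → C₂ x → False) (k13 : ∀ x, C₁ x → C₃ x → False)
    (k23 : ∀ x, C₂ x → C₃ x → False) : False := by
  rcases h₁ with h1 | h1 <;> rcases h₂ with h2 | h2 <;> rcases h₃ with h3 | h3 <;>
    first
      | exact k12 _ h1 h2
      | exact k13 _ h1 h3
      | exact k23 _ h2 h3

/-- If `A` is an independent set of `n > 2` non-isolated vertices of `G` and `G'` is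
obtained by attaching a double matching gadget to `A`, then for every vertex `w` of the
gadget or of `A` there are no two vertices `u, v ≠ w` with `N(w) ⊆ N(u) ∪ N(v)` in `G'`. -/
theorem stmt12 {V : Type*} [Fintype V] (G : SimpleGraph V) (n : ℕ) (hn : 2 < n)
    (A : Fin n → V) (hinj : Function.Injective A)
    (hind : ∀ i j : Fin n, ¬ G.Adj (A i) (A j))
    (hiso : ∀ i : Fin n, ∃ v : V, G.Adj (A i) v) :
    ∀ w : V ⊕ Fin 2 ⊕ (Fin 2 × Fin n),
      ((∃ j, w = Sum.inl (A j)) ∨ (∃ i, w = Sum.inr (Sum.inl i)) ∨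
        (∃ p, w = Sum.inr (Sum.inr p))) →
      ¬ ∃ u v : V ⊕ Fin 2 ⊕ (Fin 2 × Fin n), u ≠ w ∧ v ≠ w ∧
        ∀ z, (doubleMatchGraph G n A).Adj w z →
          ((doubleMatchGraph G n A).Adj u z ∨ (doubleMatchGraph G n A).Adj v z) := by
  intro w hw
  rintro ⟨u, v, hu, hv, hz⟩
  rcases hw with ⟨j, rfl⟩ | ⟨i, rfl⟩ | ⟨⟨i, j⟩, rfl⟩
  · -- w = A j
    obtain ⟨g, hg⟩ := hiso j
    have key1 : ∀ x, (doubleMatchGraph G n A).Adj x (Sum.inl g) → ∃ a, x = Sum.inl a := by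
      intro x hx
      rcases adj_to_inl hx with ⟨a, ha, _⟩ | ⟨i, k, _, hk⟩
      · exact ⟨a, ha⟩
      · exact absurd (hk ▸ hg) (hind j k)
    have key2 : ∀ x, x ≠ Sum.inl (A j) →
        (doubleMatchGraph G n A).Adj x (Sum.inr (Sum.inr ((0 : Fin 2), j))) →
        (x = Sum.inr (Sum.inl (0 : Fin 2)) ∨ ∃ k : Fin n, x = Sum.inr (Sum.inr ((1 : Fin 2), k))) := by
      intro x hxw hx
      rcases adj_to_pend hx with h | h | ⟨i', j', rfl, hc⟩
      · exact Or.inl h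
      · exact absurd h hxw
      · rcases hc with ⟨h0, h1, _⟩ | ⟨h0, h1, _⟩
        · exact absurd h1 (by decide)
        · exact Or.inr ⟨j', by rw [fin2_eq_one h1]⟩
    have key3 : ∀ x, x ≠ Sum.inl (A j) →
        (doubleMatchGraph G n A).Adj x (Sum.inr (Sum.inr ((1 : Fin 2), j))) →
        (x = Sum.inr (Sum.inl (1 : Fin 2)) ∨ ∃ k : Fin n, x = Sum.inr (Sum.inr ((0 : Fin 2), k))) := by
      intro x hxw hx
      rcases adj_to_pend hx with h | h | ⟨i', j', rfl, hc⟩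
      · exact Or.inl h
      · exact absurd h hxw
      · rcases hc with ⟨h0, h1, _⟩ | ⟨h0, h1, _⟩
        · exact Or.inr ⟨j', by rw [fin2_eq_zero h0]⟩
        · exact absurd h0 (by decide)
    refine pigeon (C₁ := fun x => ∃ a, x = Sum.inl a)
      (C₂ := fun x => x = Sum.inr (Sum.inl (0 : Fin 2)) ∨
        ∃ k : Fin n, x = Sum.inr (Sum.inr ((1 : Fin 2), k)))
      (C₃ := fun x => x = Sum.inr (Sum.inl (1 : Fin 2)) ∨
        ∃ k : Fin n, x = Sum.inr (Sum.inr ((0 : Fin 2), k)))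
      ((hz (Sum.inl g) (adj_ll.mpr hg)).imp (key1 u) (key1 v))
      ((hz (Sum.inr (Sum.inr ((0 : Fin 2), j))) (adj_lp.mpr rfl)).imp (key2 u hu) (key2 v hv))
      ((hz (Sum.inr (Sum.inr ((1 : Fin 2), j))) (adj_lp.mpr rfl)).imp (key3 u hu) (key3 v hv))
      ?_ ?_ ?_
    · rintro x ⟨a, rfl⟩ (h | ⟨k, h⟩) <;> exact nomatch h
    · rintro x ⟨a, rfl⟩ (h | ⟨k, h⟩) <;> exact nomatch h
    · rintro x (rfl | ⟨k, rfl⟩) (h | ⟨k', h⟩)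
      · exact absurd (Sum.inl.inj (Sum.inr.inj h)) (by decide)
      · exact nomatch h
      · exact nomatch h
      · have h2 : (1 : Fin 2) = 0 := congrArg Prod.fst (Sum.inr.inj (Sum.inr.inj h))
        exact absurd h2 (by decide)
  · -- w = root i
    have hn0 : 0 < n := by omega
    fin_cases i
    · -- i = 0
      have key : ∀ (x) (jj : Fin n), x ≠ Sum.inr (Sum.inl (0 : Fin 2)) →
          (doubleMatchGraph G n A).Adj x (Sum.inr (Sum.inr ((0 : Fin 2), jj))) →
          (x = Sum.inl (A jj) ∨
            ∃ k : Fin n, x = Sum.inr (Sum.inr ((1 : Fin 2), k)) ∧ k.val = (jj.val + 1) % n) := by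
        intro x jj hxw hx
        rcases adj_to_pend hx with h | h | ⟨i', j', rfl, hc⟩
        · exact absurd h hxw
        · exact Or.inl h
        · rcases hc with ⟨h0, h1, _⟩ | ⟨h0, h1, hc⟩
          · exact absurd h1 (by decide)
          · exact Or.inr ⟨j', by rw [fin2_eq_one h1], hc⟩
      have kk : ∀ (a b : Fin n), a.val ≠ b.val → ∀ x : V ⊕ Fin 2 ⊕ (Fin 2 × Fin n),
          (x = Sum.inl (A a) ∨
            ∃ k : Fin n, x = Sum.inr (Sum.inr ((1 : Fin 2), k)) ∧ k.val = (a.val + 1) % n) →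
          (x = Sum.inl (A b) ∨
            ∃ k : Fin n, x = Sum.inr (Sum.inr ((1 : Fin 2), k)) ∧ k.val = (b.val + 1) % n) → False := by
        rintro a b hab x (rfl | ⟨k, rfl, hk⟩) (h | ⟨k', h, hk'⟩)
        · exact hab (congrArg Fin.val (hinj (Sum.inl.inj h)))
        · exact nomatch h
        · exact nomatch h
        · have hkk : k = k' := congrArg Prod.snd (Sum.inr.inj (Sum.inr.inj h))
          exact hab (succ_mod_inj a.isLt b.isLt (by rw [← hk, hkk, hk']))
      obtain ⟨j0, hj0⟩ : ∃ k : Fin n, k.val = 0 := ⟨⟨0, by omega⟩, rfl⟩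
      obtain ⟨j1, hj1⟩ : ∃ k : Fin n, k.val = 1 := ⟨⟨1, by omega⟩, rfl⟩
      obtain ⟨j2, hj2⟩ : ∃ k : Fin n, k.val = 2 := ⟨⟨2, by omega⟩, rfl⟩
      exact pigeon
        (C₁ := fun x => x = Sum.inl (A j0) ∨
          ∃ k : Fin n, x = Sum.inr (Sum.inr ((1 : Fin 2), k)) ∧ k.val = (j0.val + 1) % n)
        (C₂ := fun x => x = Sum.inl (A j1) ∨
          ∃ k : Fin n, x = Sum.inr (Sum.inr ((1 : Fin 2), k)) ∧ k.val = (j1.val + 1) % n)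
        (C₃ := fun x => x = Sum.inl (A j2) ∨
          ∃ k : Fin n, x = Sum.inr (Sum.inr ((1 : Fin 2), k)) ∧ k.val = (j2.val + 1) % n)
        ((hz (Sum.inr (Sum.inr ((0 : Fin 2), j0))) (adj_rp.mpr rfl)).imp
          (key u j0 hu) (key v j0 hv))
        ((hz (Sum.inr (Sum.inr ((0 : Fin 2), j1))) (adj_rp.mpr rfl)).imp
          (key u j1 hu) (key v j1 hv))
        ((hz (Sum.inr (Sum.inr ((0 : Fin 2), j2))) (adj_rp.mpr rfl)).imp
          (key u j2 hu) (key v j2 hv))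
        (kk j0 j1 (by rw [hj0, hj1]; omega))
        (kk j0 j2 (by rw [hj0, hj2]; omega))
        (kk j1 j2 (by rw [hj1, hj2]; omega))
    · -- i = 1
      have key : ∀ (x) (jj : Fin n), x ≠ Sum.inr (Sum.inl (1 : Fin 2)) →
          (doubleMatchGraph G n A).Adj x (Sum.inr (Sum.inr ((1 : Fin 2), jj))) →
          (x = Sum.inl (A jj) ∨
            ∃ k : Fin n, x = Sum.inr (Sum.inr ((0 : Fin 2), k)) ∧ jj.val = (k.val + 1) % n) := by
        intro x jj hxw hx
        rcases adj_to_pend hx with h | h | ⟨i', j', rfl, hc⟩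
        · exact absurd h hxw
        · exact Or.inl h
        · rcases hc with ⟨h0, h1, hc⟩ | ⟨h0, h1, _⟩
          · exact Or.inr ⟨j', by rw [fin2_eq_zero h0], hc⟩
          · exact absurd h0 (by decide)
      have kk : ∀ (a b : Fin n), a.val ≠ b.val → ∀ x : V ⊕ Fin 2 ⊕ (Fin 2 × Fin n),
          (x = Sum.inl (A a) ∨
            ∃ k : Fin n, x = Sum.inr (Sum.inr ((0 : Fin 2), k)) ∧ a.val = (k.val + 1) % n) →
          (x = Sum.inl (A b) ∨
            ∃ k : Fin n, x = Sum.inr (Sum.inr ((0 : Fin 2), k)) ∧ b.val = (k.val + 1) % n) → False := by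
        rintro a b hab x (rfl | ⟨k, rfl, hk⟩) (h | ⟨k', h, hk'⟩)
        · exact hab (congrArg Fin.val (hinj (Sum.inl.inj h)))
        · exact nomatch h
        · exact nomatch h
        · have hkk : k = k' := congrArg Prod.snd (Sum.inr.inj (Sum.inr.inj h))
          exact hab (by rw [hk, hkk, hk'])
      obtain ⟨j0, hj0⟩ : ∃ k : Fin n, k.val = 0 := ⟨⟨0, by omega⟩, rfl⟩
      obtain ⟨j1, hj1⟩ : ∃ k : Fin n, k.val = 1 := ⟨⟨1, by omega⟩, rfl⟩
      obtain ⟨j2, hj2⟩ : ∃ k : Fin n, k.val = 2 := ⟨⟨2, by omega⟩, rfl⟩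
      exact pigeon
        (C₁ := fun x => x = Sum.inl (A j0) ∨
          ∃ k : Fin n, x = Sum.inr (Sum.inr ((0 : Fin 2), k)) ∧ j0.val = (k.val + 1) % n)
        (C₂ := fun x => x = Sum.inl (A j1) ∨
          ∃ k : Fin n, x = Sum.inr (Sum.inr ((0 : Fin 2), k)) ∧ j1.val = (k.val + 1) % n)
        (C₃ := fun x => x = Sum.inl (A j2) ∨
          ∃ k : Fin n, x = Sum.inr (Sum.inr ((0 : Fin 2), k)) ∧ j2.val = (k.val + 1) % n)
        ((hz (Sum.inr (Sum.inr ((1 : Fin 2), j0))) (adj_rp.mpr rfl)).imp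
          (key u j0 hu) (key v j0 hv))
        ((hz (Sum.inr (Sum.inr ((1 : Fin 2), j1))) (adj_rp.mpr rfl)).imp
          (key u j1 hu) (key v j1 hv))
        ((hz (Sum.inr (Sum.inr ((1 : Fin 2), j2))) (adj_rp.mpr rfl)).imp
          (key u j2 hu) (key v j2 hv))
        (kk j0 j1 (by rw [hj0, hj1]; omega))
        (kk j0 j2 (by rw [hj0, hj2]; omega))
        (kk j1 j2 (by rw [hj1, hj2]; omega))
  · -- w = pend (i, j)
    have hn0 : 0 < n := by omega
    fin_cases i
    · -- i = 0
      set s : Fin n := ⟨(j.val + 1) % n, Nat.mod_lt _ hn0⟩ with hs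
      have key1 : ∀ x, (doubleMatchGraph G n A).Adj x (Sum.inr (Sum.inl (0 : Fin 2))) →
          ∃ k : Fin n, x = Sum.inr (Sum.inr ((0 : Fin 2), k)) := fun x hx => adj_to_root hx
      have key2 : ∀ x, x ≠ Sum.inr (Sum.inr ((0 : Fin 2), j)) →
          (doubleMatchGraph G n A).Adj x (Sum.inl (A j)) →
          ((∃ a, x = Sum.inl a ∧ G.Adj a (A j)) ∨ x = Sum.inr (Sum.inr ((1 : Fin 2), j))) := by
        intro x hxw hx
        rcases adj_to_inl hx with ⟨a, ha, hadj⟩ | ⟨i', k, rfl, hk⟩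
        · exact Or.inl ⟨a, ha, hadj⟩
        · have hkj : k = j := hinj hk.symm
          subst hkj
          rcases (by omega : i'.val = 0 ∨ i'.val = 1) with h | h
          · exact absurd (by rw [fin2_eq_zero h]) hxw
          · exact Or.inr (by rw [fin2_eq_one h])
      have key3 : ∀ x, x ≠ Sum.inr (Sum.inr ((0 : Fin 2), j)) →
          (doubleMatchGraph G n A).Adj x (Sum.inr (Sum.inr ((1 : Fin 2), s))) →
          (x = Sum.inr (Sum.inl (1 : Fin 2)) ∨ x = Sum.inl (A s)) := by
        intro x hxw hx
        rcases adj_to_pend hx with h | h | ⟨i', j', rfl, hc⟩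
        · exact Or.inl h
        · exact Or.inr h
        · rcases hc with ⟨h0, h1, hc⟩ | ⟨h0, h1, _⟩
          · have hje : j' = j := Fin.ext (succ_mod_inj j'.isLt j.isLt hc.symm)
            exact absurd (by rw [fin2_eq_zero h0, hje]) hxw
          · exact absurd h0 (by decide)
      refine pigeon (C₁ := fun x => ∃ k : Fin n, x = Sum.inr (Sum.inr ((0 : Fin 2), k)))
        (C₂ := fun x => (∃ a, x = Sum.inl a ∧ G.Adj a (A j)) ∨
          x = Sum.inr (Sum.inr ((1 : Fin 2), j)))
        (C₃ := fun x => x = Sum.inr (Sum.inl (1 : Fin 2)) ∨ x = Sum.inl (A s))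
        ((hz (Sum.inr (Sum.inl (0 : Fin 2))) (adj_rp.mpr rfl).symm).imp (key1 u) (key1 v))
        ((hz (Sum.inl (A j)) (adj_lp.mpr rfl).symm).imp (key2 u hu) (key2 v hv))
        ((hz (Sum.inr (Sum.inr ((1 : Fin 2), s)))
          (adj_pp.mpr (Or.inl ⟨rfl, rfl, rfl⟩))).imp (key3 u hu) (key3 v hv))
        ?_ ?_ ?_
      · rintro x ⟨k, rfl⟩ (⟨a, h, _⟩ | h)
        · exact nomatch h
        · have h2 : (0 : Fin 2) = 1 := congrArg Prod.fst (Sum.inr.inj (Sum.inr.inj h))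
          exact absurd h2 (by decide)
      · rintro x ⟨k, rfl⟩ (h | h)
        · exact nomatch h
        · exact nomatch h
      · rintro x (⟨a, rfl, hadj⟩ | rfl) (h | h)
        · exact nomatch h
        · exact hind s j ((Sum.inl.inj h) ▸ hadj)
        · exact nomatch h
        · exact nomatch h
    · -- i = 1
      obtain ⟨p, hp⟩ := exists_pred hn0 j
      have key1 : ∀ x, (doubleMatchGraph G n A).Adj x (Sum.inr (Sum.inl (1 : Fin 2))) →
          ∃ k : Fin n, x = Sum.inr (Sum.inr ((1 : Fin 2), k)) := fun x hx => adj_to_root hx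
      have key2 : ∀ x, x ≠ Sum.inr (Sum.inr ((1 : Fin 2), j)) →
          (doubleMatchGraph G n A).Adj x (Sum.inl (A j)) →
          ((∃ a, x = Sum.inl a ∧ G.Adj a (A j)) ∨ x = Sum.inr (Sum.inr ((0 : Fin 2), j))) := by
        intro x hxw hx
        rcases adj_to_inl hx with ⟨a, ha, hadj⟩ | ⟨i', k, rfl, hk⟩
        · exact Or.inl ⟨a, ha, hadj⟩
        · have hkj : k = j := hinj hk.symm
          subst hkj
          rcases (by omega : i'.val = 0 ∨ i'.val = 1) with h | h
          · exact Or.inr (by rw [fin2_eq_zero h])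
          · exact absurd (by rw [fin2_eq_one h]) hxw
      have key3 : ∀ x, x ≠ Sum.inr (Sum.inr ((1 : Fin 2), j)) →
          (doubleMatchGraph G n A).Adj x (Sum.inr (Sum.inr ((0 : Fin 2), p))) →
          (x = Sum.inr (Sum.inl (0 : Fin 2)) ∨ x = Sum.inl (A p)) := by
        intro x hxw hx
        rcases adj_to_pend hx with h | h | ⟨i', j', rfl, hc⟩
        · exact Or.inl h
        · exact Or.inr h
        · rcases hc with ⟨h0, h1, _⟩ | ⟨h0, h1, hc⟩
          · exact absurd h1 (by decide)
          · have hje : j' = j := Fin.ext (hc.trans hp)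
            exact absurd (by rw [fin2_eq_one h1, hje]) hxw
      refine pigeon (C₁ := fun x => ∃ k : Fin n, x = Sum.inr (Sum.inr ((1 : Fin 2), k)))
        (C₂ := fun x => (∃ a, x = Sum.inl a ∧ G.Adj a (A j)) ∨
          x = Sum.inr (Sum.inr ((0 : Fin 2), j)))
        (C₃ := fun x => x = Sum.inr (Sum.inl (0 : Fin 2)) ∨ x = Sum.inl (A p))
        ((hz (Sum.inr (Sum.inl (1 : Fin 2))) (adj_rp.mpr rfl).symm).imp (key1 u) (key1 v))
        ((hz (Sum.inl (A j)) (adj_lp.mpr rfl).symm).imp (key2 u hu) (key2 v hv))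
        ((hz (Sum.inr (Sum.inr ((0 : Fin 2), p)))
          (adj_pp.mpr (Or.inr ⟨rfl, rfl, hp.symm⟩))).imp (key3 u hu) (key3 v hv))
        ?_ ?_ ?_
      · rintro x ⟨k, rfl⟩ (⟨a, h, _⟩ | h)
        · exact nomatch h
        · have h2 : (1 : Fin 2) = 0 := congrArg Prod.fst (Sum.inr.inj (Sum.inr.inj h))
          exact absurd h2 (by decide)
      · rintro x ⟨k, rfl⟩ (h | h)
        · exact nomatch h
        · exact nomatch h
      · rintro x (⟨a, rfl, hadj⟩ | rfl) (h | h)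
        · exact nomatch h
        · exact hind p j ((Sum.inl.inj h) ▸ hadj)
        · exact nomatch h
        · exact nomatch h
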